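/- Let f be a proper lower semicontinuous convex function with dom f ⊇ (0,∞), and define f₀* : ℝ → ℝ ∪ {+∞} by f₀*(t) := f*(t) if f*(t') > f*(t) for every t' > t, and f₀*(t) := +∞ otherwise; let f₀ := (f₀*)* be its convex conjugate, and let f'₊(0) denote the right derivative of f at 0 (possibly −∞). Then: (i) f₀(λ) = f(λ) for all λ ≥ 0; (ii) if f'₊(0) is finite, then f₀(λ) = f'₊(0)·λ + f(0) for all λ < 0, and inf dom f₀* = f'₊(0); (iii) if f'₊(0) = −∞, then f₀(λ) = +∞ for all λ < 0. -/

import Mathlib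

open Filter Matrix
open scoped ComplexOrder
open scoped BigOperators

noncomputable section

attribute [local instance] Classical.propDecidable

/-- The effective domain of an extended-real-valued function. -/
def edom (f : ℝ → EReal) : Set ℝ := {x | f x < ⊤}

/-- The convex conjugate `f*`(t) = sup_λ (t·λ − f(λ)). -/
def econj (f : ℝ → EReal) (t : ℝ) : EReal := ⨆ l : ℝ, ((t * l : ℝ) : EReal) - f l

/-- The function `g` associated to `f`, i.e. the lsc positively homogeneous
extension of `(λ1,λ2) ↦ λ2 f(λ1/λ2)`. -/
def gfun (f : ℝ → EReal) (l1 l2 : ℝ) : EReal :=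
  if l1 = 0 ∧ l2 = 0 then 0
  else if l1 ∈ edom f ∧ 0 < l2 then ((l2 : ℝ) : EReal) * f (l1 / l2)
  else if l1 ∈ edom f ∧ l2 = 0 then
    limUnder (nhdsWithin 0 (Set.Ioi 0)) fun u : ℝ => ((u : ℝ) : EReal) * f (l1 / u)
  else ⊤

/-- A finite-outcome POVM. -/
def IsPOVM {n m : ℕ} (M : Fin m → Matrix (Fin n) (Fin n) ℂ) : Prop :=
  (∀ x, (M x).PosSemidef) ∧ ∑ x, M x = 1

/-- The maximized measured f-divergence `D_f^min`. -/
def Dfmin (f : ℝ → EReal) {n : ℕ} (ρ1 ρ2 : Matrix (Fin n) (Fin n) ℂ) : EReal :=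
  ⨆ (m : ℕ) (M : Fin m → Matrix (Fin n) (Fin n) ℂ) (_ : IsPOVM M),
    ∑ x, gfun f ((ρ1 * M x).trace.re) ((ρ2 * M x).trace.re)

/-- Functional calculus on a Hermitian matrix: apply `h` to the eigenvalues. -/
def hermFC {k : ℕ} (h : ℝ → ℝ) {A : Matrix (Fin k) (Fin k) ℂ} (hA : A.IsHermitian) :
    Matrix (Fin k) (Fin k) ℂ :=
  (hA.eigenvectorUnitary : Matrix (Fin k) (Fin k) ℂ) *
    Matrix.diagonal (fun i => (h (hA.eigenvalues i) : ℂ)) *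
    (star (hA.eigenvectorUnitary : Matrix (Fin k) (Fin k) ℂ))

/-- The spectrum of the Hermitian matrix `A` is contained in `S`. -/
def specIn {k : ℕ} {A : Matrix (Fin k) (Fin k) ℂ} (hA : A.IsHermitian) (S : Set ℝ) : Prop :=
  ∀ i, hA.eigenvalues i ∈ S

/-- The Loewner order: `A ≤ B`. -/
def Loewner {k : ℕ} (A B : Matrix (Fin k) (Fin k) ℂ) : Prop := (B - A).PosSemidef

/-- Operator convexity of a real function on a set `S` (midpoint form, via
the functional calculus on Hermitian matrices with spectrum in `S`). -/
def OpConvexOn (h : ℝ → ℝ) (S : Set ℝ) : Prop :=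
  ∀ (k : ℕ), 1 ≤ k → ∀ (A B : Matrix (Fin k) (Fin k) ℂ)
    (hA : A.IsHermitian) (hB : B.IsHermitian) (hM : ((1/2 : ℂ) • (A + B)).IsHermitian),
    specIn hA S → specIn hB S →
    Loewner (hermFC h hM) ((1/2 : ℂ) • (hermFC h hA + hermFC h hB))

/-- The real-valued version of the convex conjugate of `f` (used for the
functional calculus; on `dom f*` it agrees with `f*` when `f` is proper). -/
def econjR (f : ℝ → EReal) (t : ℝ) : ℝ := (econj f t).toReal

/-- Condition (I): `f*` is operator convex on its effective domain. -/
def CondI (f : ℝ → EReal) : Prop := OpConvexOn (econjR f) (edom (econj f))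

/-- `f` is a proper lower semicontinuous convex function with `dom f ⊇ (0,∞)`. -/
structure NiceF (f : ℝ → EReal) : Prop where
  ne_bot : ∀ x, f x ≠ ⊥
  ne_top : ∃ x, f x ≠ ⊤
  lsc : LowerSemicontinuous f
  convex : ∀ x y a b : ℝ, 0 ≤ a → 0 ≤ b → a + b = 1 →
    f (a * x + b * y) ≤ ((a : ℝ) : EReal) * f x + ((b : ℝ) : EReal) * f y
  dom : Set.Ioi (0 : ℝ) ⊆ edom f

/-- The conjugate of the canonicalization: `f₀*(t) = f*(t)` if `f*` is strictly
increasing to the right of `t`, and `+∞` otherwise. -/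
def fzeroStar (f : ℝ → EReal) (t : ℝ) : EReal :=
  if ∀ t' : ℝ, t < t' → econj f t < econj f t' then econj f t else ⊤

/-- The canonicalization `f₀ = (f₀*)*`. -/
def fzero (f : ℝ → EReal) : ℝ → EReal := econj (fzeroStar f)

/-!
The supremum defining `f₀(λ) = sup_t (tλ − f₀*(t))` only sees the points `t` where `f*` increases
strictly to the right. Since `f*` is lower semicontinuous and grows at least linearly, from any `t`
with `f*(t)` finite one can move right to the largest `u` with `f*(u) ≤ f*(t)`, where `f*` does
increase strictly; for `λ ≥ 0` this move does not decrease `tλ − f*(t)`, so `f₀(λ) = f**(λ) = f(λ)`,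
the last equality by separating `(λ, c)` from the closed convex epigraph of `f` when `c < f(λ)`.

If the slope `(f(λ) − f(0))/λ` tends to a finite `r`, then `f` lies above the line `rλ + f(0)`,
so `r` minimizes `f*` with `f*(r) = −f(0)`, and `r` is the leftmost point where `f*` increases
strictly: for `λ < 0` the supremum defining `f₀(λ)` is attained at `t = r`. If the slope tends
to `−∞`, then `dom f ⊆ [0, ∞)` and, for every `t`, some `λ > 0` has `tλ − f(λ) > −f(0)`; this
makes `f*` increase strictly at every point of its domain, so `f₀* = f*`, and `f₀ = f**` is `+∞`
on `(−∞, 0)` because `f*` is bounded on a left half-line.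
-/
open Set Topology

def StrictlyIncreasesAfter (g : ℝ → EReal) (t : ℝ) : Prop := ∀ t', t < t' → g t < g t'

theorem StrictlyIncreasesAfter.le_of_forall_le {g : ℝ → EReal} {r t : ℝ}
    (hr : ∀ s, g r ≤ g s) (ht : StrictlyIncreasesAfter g t) : r ≤ t :=
  not_lt.1 fun h => (ht r h).not_ge (hr t)

theorem exists_strictlyIncreasesAfter_of_bddAbove {g : ℝ → EReal} (hg : LowerSemicontinuous g)
    {t : ℝ} (hbdd : BddAbove {s | t ≤ s ∧ g s ≤ g t}) :
    ∃ u, t ≤ u ∧ g u ≤ g t ∧ StrictlyIncreasesAfter g u := by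
  set M := {s | t ≤ s ∧ g s ≤ g t}
  have hM : IsClosed M := isClosed_Ici.inter (hg.isClosed_preimage (g t))
  have hu : sSup M ∈ M := hM.csSup_mem ⟨t, le_rfl, le_rfl⟩ hbdd
  refine ⟨sSup M, hu.1, hu.2, fun t' ht' => hu.2.trans_lt (not_le.1 fun h => ?_)⟩
  exact (le_csSup hbdd ⟨hu.1.trans ht'.le, h⟩).not_gt ht'

section Conjugate

variable {f g : ℝ → EReal}

theorem le_econj (f : ℝ → EReal) (t l : ℝ) : ((t * l : ℝ) : EReal) - f l ≤ econj f t :=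
  le_iSup (fun l : ℝ => ((t * l : ℝ) : EReal) - f l) l

theorem neg_le_econj (f : ℝ → EReal) (t : ℝ) : -f 0 ≤ econj f t := by
  simpa using le_econj f t 0

theorem sub_econj_le (f : ℝ → EReal) (t l : ℝ) : ((t * l : ℝ) : EReal) - econj f t ≤ f l := by
  induction hfl : f l with
  | top => exact le_top
  | bot =>
    have := le_econj f t l
    rw [hfl, EReal.coe_sub_bot, top_le_iff] at this
    simp [this]
  | coe y =>
    have := le_econj f t l
    rw [hfl, ← EReal.coe_sub] at this
    exact (EReal.sub_le_sub le_rfl this).trans_eq (by norm_cast; ring)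

theorem econj_antitone (h : f ≤ g) : econj g ≤ econj f :=
  fun _ => iSup_mono fun l => EReal.sub_le_sub le_rfl (h l)

theorem econj_econj_le (f : ℝ → EReal) : econj (econj f) ≤ f :=
  fun l => iSup_le fun t => by rw [mul_comm]; exact sub_econj_le f t l

theorem lowerSemicontinuous_econj (f : ℝ → EReal) : LowerSemicontinuous (econj f) := by
  refine lowerSemicontinuous_iSup fun l => ?_
  induction f l with
  | top =>
    simp_rw [EReal.sub_top]
    exact lowerSemicontinuous_const
  | bot =>
    simp_rw [EReal.coe_sub_bot]
    exact lowerSemicontinuous_const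
  | coe y =>
    exact (continuous_coe_real_ereal.comp
      (by fun_prop : Continuous fun t : ℝ => t * l - y)).lowerSemicontinuous

theorem monotone_econj_of_forall_neg_eq_top (h : ∀ x < 0, f x = ⊤) : Monotone (econj f) :=
  fun t t' htt' => iSup_mono fun x => by
    rcases lt_or_ge x 0 with hx | hx
    · simp [h x hx]
    · exact EReal.sub_le_sub (by exact_mod_cast mul_le_mul_of_nonneg_right htt' hx) le_rfl

theorem econj_econj_eq_top_of_forall_neg_eq_top (h : ∀ x < 0, f x = ⊤) {t₀ : ℝ}
    (ht₀ : econj f t₀ ≠ ⊤) {l : ℝ} (hl : l < 0) : econj (econj f) l = ⊤ := by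
  refine (EReal.eq_top_iff_forall_lt _).2 fun C => ?_
  set G := (econj f t₀).toReal
  set t := min t₀ ((C + G + 1) / l)
  have hlt : C + G + 1 ≤ l * t := by
    have := mul_le_mul_of_nonpos_left (min_le_right t₀ ((C + G + 1) / l)) hl.le
    rwa [mul_div_cancel₀ _ hl.ne] at this
  have hG : econj f t ≤ G :=
    (monotone_econj_of_forall_neg_eq_top h (min_le_left _ _)).trans (EReal.le_coe_toReal ht₀)
  calc (C : EReal) < ((l * t - G : ℝ) : EReal) := by exact_mod_cast (by linarith)
    _ ≤ ((l * t : ℝ) : EReal) - econj f t := by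
      rw [EReal.coe_sub]; exact EReal.sub_le_sub le_rfl hG
    _ ≤ econj (econj f) l := le_econj _ l t

end Conjugate

section Canonicalization

variable {f : ℝ → EReal} {l r t : ℝ}

theorem fzeroStar_of_strictlyIncreasesAfter (h : StrictlyIncreasesAfter (econj f) t) :
    fzeroStar f t = econj f t :=
  if_pos h

theorem fzeroStar_of_not_strictlyIncreasesAfter (h : ¬StrictlyIncreasesAfter (econj f) t) :
    fzeroStar f t = ⊤ :=
  if_neg h

theorem strictlyIncreasesAfter_of_mem_edom_fzeroStar (h : t ∈ edom (fzeroStar f)) :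
    StrictlyIncreasesAfter (econj f) t := by
  by_contra hn
  have h' : fzeroStar f t < ⊤ := h
  rw [fzeroStar_of_not_strictlyIncreasesAfter hn] at h'
  exact h'.false

theorem econj_le_fzeroStar (f : ℝ → EReal) : econj f ≤ fzeroStar f := fun t => by
  by_cases h : StrictlyIncreasesAfter (econj f) t
  · rw [fzeroStar_of_strictlyIncreasesAfter h]
  · rw [fzeroStar_of_not_strictlyIncreasesAfter h]; exact le_top

theorem fzero_le (f : ℝ → EReal) : fzero f ≤ f :=
  (econj_antitone (econj_le_fzeroStar f)).trans (econj_econj_le f)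

theorem sub_econj_le_fzero (h : StrictlyIncreasesAfter (econj f) t) :
    ((l * t : ℝ) : EReal) - econj f t ≤ fzero f l :=
  fzeroStar_of_strictlyIncreasesAfter h ▸ le_econj (fzeroStar f) l t

theorem fzeroStar_eq_econj (h : ∀ t, econj f t ≠ ⊤ → StrictlyIncreasesAfter (econj f) t) :
    fzeroStar f = econj f := by
  funext t
  by_cases ht : econj f t = ⊤
  · exact (top_le_iff.1 (ht ▸ econj_le_fzeroStar f t)).trans ht.symm
  · exact fzeroStar_of_strictlyIncreasesAfter (h t ht)

variable (hr : ∀ s, econj f r ≤ econj f s) (hstrict : StrictlyIncreasesAfter (econj f) r)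
include hr hstrict

theorem fzero_eq_of_forall_econj_le (hl : l ≤ 0) :
    fzero f l = ((l * r : ℝ) : EReal) - econj f r := by
  refine le_antisymm (iSup_le fun t => ?_) (sub_econj_le_fzero hstrict)
  by_cases ht : StrictlyIncreasesAfter (econj f) t
  · rw [fzeroStar_of_strictlyIncreasesAfter ht]
    have hrt : r ≤ t := ht.le_of_forall_le hr
    exact EReal.sub_le_sub (by exact_mod_cast mul_le_mul_of_nonpos_left hrt hl) (hr t)
  · simp [fzeroStar_of_not_strictlyIncreasesAfter ht]

theorem isLeast_edom_fzeroStar (hfin : econj f r ≠ ⊤) : IsLeast (edom (fzeroStar f)) r :=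
  ⟨by simpa [edom, fzeroStar_of_strictlyIncreasesAfter hstrict, lt_top_iff_ne_top] using hfin,
    fun _ ht => (strictlyIncreasesAfter_of_mem_edom_fzeroStar ht).le_of_forall_le hr⟩

end Canonicalization

theorem apply_zero_ne_top_of_tendsto {f : ℝ → EReal} {a : EReal} (ha : a ≠ ⊥)
    (h : Tendsto (fun l : ℝ => ((l⁻¹ : ℝ) : EReal) * (f l - f 0)) (𝓝[>] 0) (𝓝 a)) :
    f 0 ≠ ⊤ := by
  intro h0
  have hbot : ∀ᶠ l in 𝓝[>] (0 : ℝ), ((l⁻¹ : ℝ) : EReal) * (f l - f 0) = ⊥ :=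
    eventually_nhdsWithin_of_forall fun l hl => by
      rw [h0, EReal.sub_top, EReal.coe_mul_bot_of_pos (inv_pos.2 hl)]
  exact ha (tendsto_nhds_unique h (tendsto_const_nhds.congr' (hbot.mono fun _ h => h.symm)))

theorem LowerSemicontinuousAt.eventually_coe_mul_sub_lt {f : ℝ → EReal}
    (hf : LowerSemicontinuousAt f 0) (t : ℝ) {c : ℝ} (hc : -f 0 < c) :
    ∀ᶠ x in 𝓝 0, ((t * x : ℝ) : EReal) - f x < c := by
  obtain ⟨c', hc', hc'c⟩ := EReal.exists_between_coe_real hc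
  have hlow : ∀ᶠ x in 𝓝 0, ((-c' : ℝ) : EReal) < f x :=
    hf _ (by rw [EReal.coe_neg]; exact EReal.neg_lt_comm.1 hc')
  have hsmall : ∀ᶠ x in 𝓝 (0 : ℝ), t * x < c - c' :=
    (continuous_const_mul t).tendsto' 0 0 (mul_zero t) |>.eventually
      (gt_mem_nhds (sub_pos.2 (EReal.coe_lt_coe_iff.1 hc'c)))
  filter_upwards [hlow, hsmall] with x hx hx'
  calc ((t * x : ℝ) : EReal) - f x ≤ ((t * x : ℝ) : EReal) - ((-c' : ℝ) : EReal) :=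
        EReal.sub_le_sub le_rfl hx.le
    _ < c := by rw [← EReal.coe_sub]; exact_mod_cast (by linarith)

namespace NiceF

variable {f : ℝ → EReal} (hf : NiceF f)
include hf

theorem ne_top_of_pos {x : ℝ} (hx : 0 < x) : f x ≠ ⊤ := (hf.dom hx).ne

theorem coe_toReal {x : ℝ} (hx : f x ≠ ⊤) : ((f x).toReal : EReal) = f x :=
  EReal.coe_toReal hx (hf.ne_bot x)

theorem coe_sub_eq {x a : ℝ} (hx : f x ≠ ⊤) :
    (a : EReal) - f x = ((a - (f x).toReal : ℝ) : EReal) := by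
  rw [EReal.coe_sub, hf.coe_toReal hx]

theorem econj_le_coe {t b : ℝ} (h : ∀ x, f x ≠ ⊤ → t * x - (f x).toReal ≤ b) :
    econj f t ≤ b :=
  iSup_le fun x => by
    by_cases hx : f x = ⊤
    · simp [hx]
    · rw [hf.coe_sub_eq hx]; exact_mod_cast h x hx

theorem coe_le_econj {x : ℝ} (hx : f x ≠ ⊤) (t : ℝ) :
    ((t * x - (f x).toReal : ℝ) : EReal) ≤ econj f t :=
  hf.coe_sub_eq hx ▸ le_econj f t x

theorem apply_convex_comb_le {x y a b : ℝ} (hx : f x ≠ ⊤) (hy : f y ≠ ⊤) (ha : 0 ≤ a)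
    (hb : 0 ≤ b) (hab : a + b = 1) :
    f (a * x + b * y) ≤ ((a * (f x).toReal + b * (f y).toReal : ℝ) : EReal) := by
  simpa only [EReal.coe_add, EReal.coe_mul, hf.coe_toReal hx, hf.coe_toReal hy]
    using hf.convex x y a b ha hb hab

theorem convexOn : ConvexOn ℝ (edom f) (EReal.toReal ∘ f) := by
  refine ⟨fun x hx y hy a b ha hb hab => ?_, fun x hx y hy a b ha hb hab => ?_⟩
  · exact (hf.apply_convex_comb_le hx.ne hy.ne ha hb hab).trans_lt (EReal.coe_lt_top _)
  · simpa only [Function.comp_apply, smul_eq_mul, EReal.toReal_coe] using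
      EReal.toReal_le_toReal (hf.apply_convex_comb_le hx.ne hy.ne ha hb hab)
        (hf.ne_bot _) (EReal.coe_ne_top _)

theorem apply_zero_ne_top_of_neg {x : ℝ} (hx : x < 0) (hfx : f x ≠ ⊤) : f 0 ≠ ⊤ :=
  (hf.convexOn.1.ordConnected.out (lt_top_iff_ne_top.2 hfx)
    (lt_top_iff_ne_top.2 (hf.ne_top_of_pos one_pos)) ⟨hx.le, zero_le_one⟩).ne

theorem convex_epigraph : Convex ℝ {p : ℝ × ℝ | f p.1 ≤ p.2} := by
  convert hf.convexOn.convex_epigraph using 1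
  ext ⟨x, y⟩
  simp only [edom, mem_ofPred_eq, Function.comp_apply]
  constructor
  · intro h
    have hx : f x ≠ ⊤ := ne_top_of_le_ne_top (EReal.coe_ne_top y) h
    exact ⟨lt_top_iff_ne_top.2 hx, by rw [← EReal.coe_le_coe_iff, hf.coe_toReal hx]; exact h⟩
  · rintro ⟨hx, h⟩
    rw [← hf.coe_toReal hx.ne]
    exact_mod_cast h

theorem exists_nonvertical_separation {l c : ℝ} (hl : 0 ≤ l) (hc : (c : EReal) < f l) :
    ∃ a b u : ℝ, b < 0 ∧ (∀ x, f x ≠ ⊤ → a * x + b * (f x).toReal < u) ∧ u < a * l + b * c := by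
  have hclosed : IsClosed {p : ℝ × ℝ | f p.1 ≤ p.2} := hf.lsc.isClosed_epigraph.preimage
    (continuous_fst.prodMk (continuous_coe_real_ereal.comp continuous_snd))
  obtain ⟨ψ, u, hψE, hψlc⟩ :=
    geometric_hahn_banach_closed_point hf.convex_epigraph hclosed (x := (l, c)) (not_le.2 hc)
  set a := ψ (1, 0)
  set b := ψ (0, 1)
  have hψ : ∀ x y : ℝ, ψ (x, y) = a * x + b * y := fun x y => by
    have : ((x, y) : ℝ × ℝ) = x • ((1 : ℝ), (0 : ℝ)) + y • ((0 : ℝ), (1 : ℝ)) := by simp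
    rw [this, map_add, map_smul, map_smul, smul_eq_mul, smul_eq_mul, mul_comm x, mul_comm y]
  have hsep : ∀ x, f x ≠ ⊤ → ∀ y, (f x).toReal ≤ y → a * x + b * y < u := fun x hx y hy =>
    hψ x y ▸ hψE (x, y) (by change f x ≤ (y : EReal); rw [← hf.coe_toReal hx]; exact_mod_cast hy)
  rw [hψ] at hψlc
  refine ⟨a, b, u, ?_, fun x hx => hsep x hx _ le_rfl, hψlc⟩
  -- `b > 0` fails on the vertical ray above `(1, f 1)`, and `b = 0` fails because `l` is a limit
  -- of points `x > l` of `dom f`.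
  rcases lt_trichotomy b 0 with hb | hb | hb
  · exact hb
  · have : a * l ≤ u := le_of_tendsto
      ((continuous_const_mul a).tendsto l |>.mono_left nhdsWithin_le_nhds)
      (eventually_nhdsWithin_of_forall (s := Ioi l) fun x hx => by
        simpa [hb] using (hsep x (hf.ne_top_of_pos (hl.trans_lt hx)) _ le_rfl).le)
    simp only [hb, zero_mul, add_zero] at hψlc
    linarith
  · have h1 := hsep 1 (hf.ne_top_of_pos one_pos) _ (le_max_left _ ((u - a) / b))
    have h2 := (div_le_iff₀ hb).1 (le_max_right (f 1).toReal ((u - a) / b))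
    linarith

theorem exists_lt_sub_econj {l c : ℝ} (hl : 0 ≤ l) (hc : (c : EReal) < f l) :
    ∃ t : ℝ, (c : EReal) < ((t * l : ℝ) : EReal) - econj f t := by
  obtain ⟨a, b, u, hb, hsep, hlc⟩ := hf.exists_nonvertical_separation hl hc
  have hnb : 0 < -b := neg_pos.2 hb
  have hb0 : b ≠ 0 := hb.ne
  refine ⟨a / -b, ?_⟩
  have hconj : econj f (a / -b) ≤ ((u / -b : ℝ) : EReal) := hf.econj_le_coe fun x hx => by
    have e : a / -b * x - (f x).toReal = (a * x + b * (f x).toReal) / -b := by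
      field_simp; ring
    rw [e]
    exact div_le_div_of_nonneg_right (hsep x hx).le hnb.le
  have hlt : u / -b < a / -b * l - c := by
    have e : a / -b * l - c = (a * l + b * c) / -b := by field_simp; ring
    rw [e]
    exact div_lt_div_of_pos_right hlc hnb
  calc (c : EReal) < ((a / -b * l - u / -b : ℝ) : EReal) := by exact_mod_cast (by linarith)
    _ ≤ _ := by rw [EReal.coe_sub]; exact EReal.sub_le_sub le_rfl hconj

theorem exists_econj_ne_top : ∃ t, econj f t ≠ ⊤ := by
  have h1 := hf.coe_toReal (hf.ne_top_of_pos one_pos)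
  obtain ⟨t, ht⟩ := hf.exists_lt_sub_econj zero_le_one
    (h1 ▸ EReal.coe_lt_coe_iff.2 (sub_one_lt (f 1).toReal))
  exact ⟨t, fun h => by simp [h] at ht⟩

theorem bddAbove_sublevel_econj {t : ℝ} (ht : econj f t ≠ ⊤) :
    BddAbove {s | t ≤ s ∧ econj f s ≤ econj f t} := by
  refine ⟨(econj f t).toReal + (f 1).toReal, fun s hs => ?_⟩
  have h := ((hf.coe_le_econj (hf.ne_top_of_pos one_pos) s).trans hs.2).trans
    (EReal.le_coe_toReal ht)
  have : s * 1 - (f 1).toReal ≤ (econj f t).toReal := by exact_mod_cast h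
  linarith

theorem fzero_eq_of_nonneg {l : ℝ} (hl : 0 ≤ l) : fzero f l = f l := by
  refine le_antisymm (fzero_le f l) (EReal.ge_of_forall_gt_iff_ge.1 fun c hc => ?_)
  obtain ⟨t, ht⟩ := hf.exists_lt_sub_econj hl hc
  have hfin : econj f t ≠ ⊤ := fun h => by simp [h] at ht
  obtain ⟨u, htu, hut, hu⟩ := exists_strictlyIncreasesAfter_of_bddAbove
    (lowerSemicontinuous_econj f) (hf.bddAbove_sublevel_econj hfin)
  calc (c : EReal) ≤ ((t * l : ℝ) : EReal) - econj f t := ht.le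
    _ ≤ ((l * u : ℝ) : EReal) - econj f u :=
      EReal.sub_le_sub (by rw [mul_comm l]; exact_mod_cast mul_le_mul_of_nonneg_right htu hl) hut
    _ ≤ fzero f l := sub_econj_le_fzero hu

theorem coe_slope (h0 : f 0 ≠ ⊤) {m : ℝ} (hm : 0 < m) :
    ((m⁻¹ : ℝ) : EReal) * (f m - f 0) = (slope (EReal.toReal ∘ f) 0 m : EReal) := by
  rw [← hf.coe_toReal (hf.ne_top_of_pos hm), ← hf.coe_toReal h0, ← EReal.coe_sub,
    ← EReal.coe_mul]
  simp [slope]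

theorem tendsto_slope (h0 : f 0 ≠ ⊤) {a : EReal}
    (h : Tendsto (fun l : ℝ => ((l⁻¹ : ℝ) : EReal) * (f l - f 0)) (𝓝[>] 0) (𝓝 a)) :
    Tendsto (fun m => (slope (EReal.toReal ∘ f) 0 m : EReal)) (𝓝[>] 0) (𝓝 a) :=
  h.congr' (eventually_nhdsWithin_of_forall fun _ hm => hf.coe_slope h0 hm)

theorem slope_le_slope_of_neg {x m : ℝ} (hx : x < 0) (hfx : f x ≠ ⊤) (hm : 0 < m) :
    slope (EReal.toReal ∘ f) 0 x ≤ slope (EReal.toReal ∘ f) 0 m :=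
  hf.convexOn.slope_mono (lt_top_iff_ne_top.2 (hf.apply_zero_ne_top_of_neg hx hfx))
    ⟨lt_top_iff_ne_top.2 hfx, hx.ne⟩ ⟨hf.dom hm, hm.ne'⟩ (hx.trans hm).le

theorem slope_mono (h0 : f 0 ≠ ⊤) {l m : ℝ} (hl : 0 < l) (hlm : l ≤ m) :
    slope (EReal.toReal ∘ f) 0 l ≤ slope (EReal.toReal ∘ f) 0 m :=
  hf.convexOn.slope_mono (lt_top_iff_ne_top.2 h0) ⟨hf.dom hl, hl.ne'⟩
    ⟨hf.dom (hl.trans_le hlm), (hl.trans_le hlm).ne'⟩ hlm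

section FiniteSlope

variable {r : ℝ} (h0 : f 0 ≠ ⊤)
  (hsl : Tendsto (slope (EReal.toReal ∘ f) 0) (𝓝[>] 0) (𝓝 r))
include h0 hsl

theorem le_slope_of_tendsto {m : ℝ} (hm : 0 < m) : r ≤ slope (EReal.toReal ∘ f) 0 m :=
  le_of_tendsto hsl
    (eventually_of_mem (Ioo_mem_nhdsGT hm) fun _ hl => hf.slope_mono h0 hl.1 hl.2.le)

omit h0 in
theorem slope_le_of_tendsto {x : ℝ} (hx : x < 0) (hfx : f x ≠ ⊤) :
    slope (EReal.toReal ∘ f) 0 x ≤ r :=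
  ge_of_tendsto hsl
    (eventually_nhdsWithin_of_forall fun _ hm => hf.slope_le_slope_of_neg hx hfx hm)

theorem econj_eq_neg_of_tendsto : econj f r = -f 0 := by
  refine le_antisymm ?_ (neg_le_econj f r)
  rw [← hf.coe_toReal h0, ← EReal.coe_neg]
  refine hf.econj_le_coe fun x hx => ?_
  rcases lt_trichotomy x 0 with hx0 | rfl | hx0
  · have := hf.slope_le_of_tendsto hsl hx0 hx
    simp only [slope_def_field, sub_zero, Function.comp_apply, div_le_iff_of_neg hx0] at this
    linarith
  · simp
  · have := hf.le_slope_of_tendsto h0 hsl hx0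
    simp only [slope_def_field, sub_zero, Function.comp_apply, le_div_iff₀ hx0] at this
    linarith

theorem strictlyIncreasesAfter_of_tendsto : StrictlyIncreasesAfter (econj f) r := fun t ht => by
  obtain ⟨m, hmt, hm⟩ := ((hsl.eventually (gt_mem_nhds ht)).and self_mem_nhdsWithin).exists
  simp only [slope_def_field, sub_zero, Function.comp_apply, div_lt_iff₀ hm] at hmt
  rw [hf.econj_eq_neg_of_tendsto h0 hsl, ← hf.coe_toReal h0, ← EReal.coe_neg]
  exact lt_of_lt_of_le (by exact_mod_cast (by linarith))
    (hf.coe_le_econj (hf.ne_top_of_pos hm) t)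

theorem econj_le_econj_of_tendsto (s : ℝ) : econj f r ≤ econj f s :=
  hf.econj_eq_neg_of_tendsto h0 hsl ▸ neg_le_econj f s

theorem fzero_eq_of_neg_of_tendsto {l : ℝ} (hl : l < 0) :
    fzero f l = ((r * l : ℝ) : EReal) + f 0 := by
  rw [fzero_eq_of_forall_econj_le (hf.econj_le_econj_of_tendsto h0 hsl)
    (hf.strictlyIncreasesAfter_of_tendsto h0 hsl) hl.le, hf.econj_eq_neg_of_tendsto h0 hsl,
    sub_eq_add_neg, neg_neg, mul_comm]

theorem isGLB_edom_fzeroStar_of_tendsto : IsGLB (edom (fzeroStar f)) r := by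
  refine (isLeast_edom_fzeroStar (hf.econj_le_econj_of_tendsto h0 hsl)
    (hf.strictlyIncreasesAfter_of_tendsto h0 hsl) ?_).isGLB
  rw [hf.econj_eq_neg_of_tendsto h0 hsl, ← hf.coe_toReal h0, ← EReal.coe_neg]
  exact EReal.coe_ne_top _

end FiniteSlope

theorem sub_le_neg_of_nonpos {t x m : ℝ} (hx : x ≤ 0) (hm : 0 < m)
    (hw : -f 0 < ((t * m : ℝ) : EReal) - f m) : ((t * x : ℝ) : EReal) - f x ≤ -f 0 := by
  rcases hx.eq_or_lt with rfl | hx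
  · simp
  by_cases hfx : f x = ⊤
  · simp [hfx]
  have h0 := hf.apply_zero_ne_top_of_neg hx hfx
  have hsl := hf.slope_le_slope_of_neg hx hfx hm
  rw [← hf.coe_toReal h0, ← EReal.coe_neg, hf.coe_sub_eq (hf.ne_top_of_pos hm),
    EReal.coe_lt_coe_iff] at hw
  rw [← hf.coe_toReal h0, ← EReal.coe_neg, hf.coe_sub_eq hfx, EReal.coe_le_coe_iff]
  simp only [slope_def_field, sub_zero, Function.comp_apply] at hsl
  have hm' : ((f m).toReal - (f 0).toReal) / m < t := by rw [div_lt_iff₀ hm]; linarith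
  have hx' := (div_lt_iff_of_neg hx).1 (hsl.trans_lt hm')
  linarith

theorem strictlyIncreasesAfter_econj {t m : ℝ} (ht : econj f t ≠ ⊤) (hm : 0 < m)
    (hw : -f 0 < ((t * m : ℝ) : EReal) - f m) : StrictlyIncreasesAfter (econj f) t := by
  -- Were `f*(t') ≤ f*(t) =: G`, the supremum defining `G` would stay below `max c (G - (t' - t)ε)`:
  -- `λ ≤ 0` contributes at most `-f 0 < c`, `0 < λ < ε` less than `c` by lower semicontinuity
  -- of `f` at `0`, and `λ ≥ ε` at most `f*(t') - (t' - t)λ`.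
  refine fun t' htt' => lt_of_not_ge fun hle => ?_
  have hwt := hw.trans_le (le_econj f t m)
  set G := (econj f t).toReal
  have hG : econj f t = G := (EReal.coe_toReal ht hwt.ne_bot).symm
  obtain ⟨c, hc0, hcG⟩ := EReal.exists_between_coe_real hwt
  rw [hG, EReal.coe_lt_coe_iff] at hcG
  obtain ⟨ε, hε, hnear⟩ := Metric.eventually_nhds_iff.1
    (LowerSemicontinuousAt.eventually_coe_mul_sub_lt (hf.lsc 0) t hc0)
  have hbound : econj f t ≤ ((max c (G - (t' - t) * ε) : ℝ) : EReal) := iSup_le fun x => by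
    rcases le_or_gt x 0 with hx | hx
    · exact (hf.sub_le_neg_of_nonpos hx hm hw).trans
        (hc0.le.trans (EReal.coe_le_coe_iff.2 (le_max_left _ _)))
    rcases lt_or_ge x ε with hxε | hxε
    · exact (hnear (by rwa [Real.dist_eq, sub_zero, abs_of_pos hx])).le.trans
        (EReal.coe_le_coe_iff.2 (le_max_left _ _))
    have hfx := hf.ne_top_of_pos hx
    have h' : t' * x - (f x).toReal ≤ G :=
      EReal.coe_le_coe_iff.1 ((hf.coe_le_econj hfx t').trans (hle.trans hG.le))
    rw [hf.coe_sub_eq hfx, EReal.coe_le_coe_iff]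
    refine le_trans ?_ (le_max_right _ _)
    nlinarith
  rw [hG, EReal.coe_le_coe_iff] at hbound
  exact (max_lt hcG (by nlinarith)).not_ge hbound

theorem exists_neg_lt_sub_of_tendsto_bot
    (h : Tendsto (fun l : ℝ => ((l⁻¹ : ℝ) : EReal) * (f l - f 0)) (𝓝[>] 0) (𝓝 ⊥)) (t : ℝ) :
    ∃ m, 0 < m ∧ -f 0 < ((t * m : ℝ) : EReal) - f m := by
  obtain ⟨m, hmt, hm⟩ :=
    ((EReal.tendsto_nhds_bot_iff_real.1 h t).and self_mem_nhdsWithin).exists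
  refine ⟨m, hm, ?_⟩
  rw [hf.coe_sub_eq (hf.ne_top_of_pos hm)]
  by_cases h0 : f 0 = ⊤
  · rw [h0, EReal.neg_top]
    exact EReal.bot_lt_coe _
  rw [hf.coe_slope h0 hm, EReal.coe_lt_coe_iff, slope_def_field, sub_zero, Function.comp_apply,
    Function.comp_apply, div_lt_iff₀ hm] at hmt
  rw [← hf.coe_toReal h0, ← EReal.coe_neg, EReal.coe_lt_coe_iff]
  linarith

theorem eq_top_of_neg_of_tendsto_bot
    (h : Tendsto (fun l : ℝ => ((l⁻¹ : ℝ) : EReal) * (f l - f 0)) (𝓝[>] 0) (𝓝 ⊥))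
    {x : ℝ} (hx : x < 0) : f x = ⊤ := by
  by_contra hfx
  have hsl := hf.tendsto_slope (hf.apply_zero_ne_top_of_neg hx hfx) h
  obtain ⟨m, hmx, hm⟩ := ((EReal.tendsto_nhds_bot_iff_real.1 hsl
    (slope (EReal.toReal ∘ f) 0 x)).and self_mem_nhdsWithin).exists
  exact (EReal.coe_lt_coe_iff.1 hmx).not_ge (hf.slope_le_slope_of_neg hx hfx hm)

theorem fzero_eq_top_of_tendsto_bot
    (h : Tendsto (fun l : ℝ => ((l⁻¹ : ℝ) : EReal) * (f l - f 0)) (𝓝[>] 0) (𝓝 ⊥))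
    {l : ℝ} (hl : l < 0) : fzero f l = ⊤ := by
  have hstar : fzeroStar f = econj f := fzeroStar_eq_econj fun t ht => by
    obtain ⟨m, hm, hw⟩ := hf.exists_neg_lt_sub_of_tendsto_bot h t
    exact hf.strictlyIncreasesAfter_econj ht hm hw
  obtain ⟨t₀, ht₀⟩ := hf.exists_econj_ne_top
  rw [fzero, hstar]
  exact econj_econj_eq_top_of_forall_neg_eq_top
    (fun _ hx => hf.eq_top_of_neg_of_tendsto_bot h hx) ht₀ hl

end NiceF

/-- (i) `f₀ = f` on `[0,∞)`; (ii) if the right derivative `f'₊(0)` is a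
finite number `r`, then `f₀(λ) = r λ + f(0)` on `(−∞,0)` and `inf dom f₀* = r`;
(iii) if `f'₊(0) = −∞` then `f₀ = +∞` on `(−∞,0)`. -/
theorem stmt_18 (f : ℝ → EReal) (hf : NiceF f) :
    (∀ l : ℝ, 0 ≤ l → fzero f l = f l) ∧
    (∀ r : ℝ,
      Filter.Tendsto (fun l : ℝ => ((l⁻¹ : ℝ) : EReal) * (f l - f 0))
          (nhdsWithin 0 (Set.Ioi 0)) (nhds ((r : ℝ) : EReal)) →
      (∀ l : ℝ, l < 0 → fzero f l = ((r * l : ℝ) : EReal) + f 0) ∧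
        IsGLB (edom (fzeroStar f)) r) ∧
    (Filter.Tendsto (fun l : ℝ => ((l⁻¹ : ℝ) : EReal) * (f l - f 0))
        (nhdsWithin 0 (Set.Ioi 0)) (nhds ⊥) →
      ∀ l : ℝ, l < 0 → fzero f l = ⊤) := by
  refine ⟨fun l hl => hf.fzero_eq_of_nonneg hl, fun r hr => ?_,
    fun hbot l hl => hf.fzero_eq_top_of_tendsto_bot hbot hl⟩
  have h0 : f 0 ≠ ⊤ := apply_zero_ne_top_of_tendsto (EReal.coe_ne_bot r) hr
  have hsl := EReal.tendsto_coe.1 (hf.tendsto_slope h0 hr)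
  exact ⟨fun l hl => hf.fzero_eq_of_neg_of_tendsto h0 hsl hl,
    hf.isGLB_edom_fzeroStar_of_tendsto h0 hsl⟩
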